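/- Parity symmetry of the quantum baker matrix: let P be the N×N permutation matrix with P_{nm} = 1 if n ≡ −m (mod N) and P_{nm} = 0 otherwise. Then P·𝖡·P = 𝖡. -/

import Mathlib

noncomputable section

noncomputable section

/-- Entry of the `M × M` discrete Fourier transform matrix: `M^{-1/2} e^{-2πiab/M}`. -/
def dftEntry (M a b : ℕ) : ℂ :=
  ((Real.sqrt M : ℝ) : ℂ)⁻¹ * Complex.exp (-(2 * Real.pi * Complex.I * a * b) / M)

/-- The `N × N` discrete Fourier transform matrix `(𝓕^N)_{mn} = N^{-1/2} e^{-2πimn/N}`. -/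
def dftMatrix (N : ℕ) : Matrix (Fin N) (Fin N) ℂ :=
  Matrix.of fun m n : Fin N => dftEntry N m n

/-- The diagonal phase matrix `Z` with `Z_{nn} = e^{iπn/N}`. -/
def Zmat (N : ℕ) : Matrix (Fin N) (Fin N) ℂ :=
  Matrix.diagonal fun n : Fin N => Complex.exp (Real.pi * Complex.I * (n : ℕ) / N)

/-- The block-diagonal matrix `D` with upper-left block `𝓕^{N/2}` and lower-right block
`−𝓕^{N/2}`. -/
def Dmat (N : ℕ) : Matrix (Fin N) (Fin N) ℂ :=
  Matrix.of fun m n : Fin N =>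
    if (m : ℕ) < N / 2 ∧ (n : ℕ) < N / 2 then dftEntry (N / 2) m n
    else if N / 2 ≤ (m : ℕ) ∧ N / 2 ≤ (n : ℕ) then
      -dftEntry (N / 2) ((m : ℕ) - N / 2) ((n : ℕ) - N / 2)
    else 0

/-- The quantum baker matrix `𝖡 = Z (𝓕^N)⁻¹ D Z⁻²`. -/
def bakerMatrix (N : ℕ) : Matrix (Fin N) (Fin N) ℂ :=
  Zmat N * (dftMatrix N)⁻¹ * Dmat N * (Zmat N ^ 2)⁻¹

/-- The parity permutation matrix `P` with `P_{nm} = 1` if `n ≡ −m (mod N)`, else `0`. -/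
def parityPermMatrix (N : ℕ) : Matrix (Fin N) (Fin N) ℂ :=
  Matrix.of fun n m : Fin N => if ((n : ℕ) + (m : ℕ)) % N = 0 then 1 else 0

/-!
Write `ζ = e^{iπ/N}` and `N = 2M`. Then `Z = diag(ζ^n)`, `(𝓕^N)⁻¹ = (ζ^{2mn}/√N)` and the blocks of
`D` are `±(ζ^{-4mn}/√M)`, and summing out the middle index gives `𝖡_{mn} = ±K(m - 2n)/√(NM)` with
`K(t) = ∑_{a<M} ζ^{(2a+1)t}`. On an even row the geometric series collapses: `𝖡_{mn} = 1/√2` if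
`m ≡ 2n (mod N)` and `0` otherwise. On an odd row the sign is `+`, and `K` changes sign both under
`t ↦ -t` (for odd `t`) and under `t ↦ t + N`. Replacing `(m, n)` by `(-m, -n)` preserves the parity
of the row and turns `m - 2n` into `-(m - 2n)` plus a multiple of `N` that is odd when `m ≠ 0`;
so even rows are invariant because the congruence is, and odd rows because the two sign changes
cancel.
-/

namespace QuantumBaker

open Finset Complex
open scoped Real

def ζ (N : ℕ) : ℂ := exp (π * I / N)

variable {N M : ℕ}

lemma ζ_ne_zero : ζ N ≠ 0 := exp_ne_zero _

lemma ζ_zpow (t : ℤ) : ζ N ^ t = exp (π * I * t / N) := by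
  rw [ζ, ← exp_int_mul]; ring_nf

lemma ζ_pow (n : ℕ) : ζ N ^ n = exp (π * I * n / N) := by
  rw [← zpow_natCast, ζ_zpow]; norm_cast

lemma isPrimitiveRoot_ζ (hN : N ≠ 0) : IsPrimitiveRoot (ζ N) (2 * N) := by
  convert Complex.isPrimitiveRoot_exp (2 * N) (by omega) using 2
  rw [ζ, mul_assoc, Nat.cast_mul, Nat.cast_two, mul_div_mul_left _ _ two_ne_zero]

lemma ζ_pow_self (hN : N ≠ 0) : ζ N ^ N = -1 := by
  rw [ζ_pow, mul_div_assoc, div_self (Nat.cast_ne_zero.2 hN), mul_one, exp_pi_mul_I]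

lemma ζ_zpow_add_mul_self (hN : N ≠ 0) (e t : ℤ) : ζ N ^ (e + N * t) = (-1) ^ t * ζ N ^ e := by
  rw [zpow_add₀ ζ_ne_zero, zpow_mul, zpow_natCast, ζ_pow_self hN, mul_comm]

lemma ζ_zpow_eq_one_iff (hN : N ≠ 0) (t : ℤ) : ζ N ^ t = 1 ↔ (2 * N : ℤ) ∣ t := by
  exact_mod_cast (isPrimitiveRoot_ζ hN).zpow_eq_one_iff_dvd t

lemma ζ_add_self_sq : ζ (N + N) ^ 2 = ζ N := by
  rw [ζ, ζ, ← exp_nat_mul]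
  push_cast
  rw [← two_mul, mul_div_assoc', mul_div_mul_left _ _ two_ne_zero]

lemma sum_range_ζ_zpow_two_mul_pow (hN : N ≠ 0) (t : ℤ) {n : ℕ} (hn : ζ N ^ (2 * t * n) = 1) :
    ∑ k ∈ range n, (ζ N ^ (2 * t)) ^ k = if (N : ℤ) ∣ t then (n : ℂ) else 0 := by
  have hone : ζ N ^ (2 * t) = 1 ↔ (N : ℤ) ∣ t := by
    rw [ζ_zpow_eq_one_iff hN, mul_dvd_mul_iff_left two_ne_zero]
  split_ifs with ht
  · simp [hone.2 ht]
  · rw [geom_sum_eq (mt hone.1 ht), ← zpow_natCast, ← zpow_mul, hn, sub_self, zero_div]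

lemma ofReal_sqrt_mul_self_natCast (n : ℕ) : ((√(n : ℝ) : ℝ) : ℂ) * ((√(n : ℝ) : ℝ) : ℂ) = n := by
  rw [← ofReal_mul, Real.mul_self_sqrt n.cast_nonneg, ofReal_natCast]

lemma dftEntry_eq_ζ (a b : ℕ) :
    dftEntry N a b = ((√(N : ℝ) : ℝ) : ℂ)⁻¹ * ζ N ^ (-(2 * a * b : ℤ)) := by
  rw [dftEntry, ζ_zpow]
  push_cast
  ring_nf

lemma inv_dftMatrix (hN : N ≠ 0) :
    (dftMatrix N)⁻¹ =
      Matrix.of fun k m : Fin N => ((√(N : ℝ) : ℝ) : ℂ)⁻¹ * ζ N ^ (2 * k * m : ℤ) := by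
  refine Matrix.inv_eq_right_inv (Matrix.ext fun m n => ?_)
  have hterm (k : Fin N) : dftMatrix N m k * ((√(N : ℝ) : ℝ) : ℂ)⁻¹ * ζ N ^ (2 * k * n : ℤ) =
      (N : ℂ)⁻¹ * (ζ N ^ (2 * ((n : ℤ) - m))) ^ (k : ℕ) := by
    rw [dftMatrix, Matrix.of_apply, dftEntry_eq_ζ, ← ofReal_sqrt_mul_self_natCast, mul_inv,
      ← zpow_natCast, ← zpow_mul, show 2 * ((n : ℤ) - m) * (k : ℕ) = -(2 * m * k : ℤ) + 2 * k * n by ring,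
      zpow_add₀ ζ_ne_zero]
    ring
  have hper : ζ N ^ (2 * ((n : ℤ) - m) * N) = 1 :=
    (ζ_zpow_eq_one_iff hN _).2 ⟨(n : ℤ) - m, by ring⟩
  simp only [Matrix.mul_apply, Matrix.of_apply, ← mul_assoc, hterm, ← mul_sum,
    Fin.sum_univ_eq_sum_range (fun k => (ζ N ^ (2 * ((n : ℤ) - m))) ^ k),
    sum_range_ζ_zpow_two_mul_pow hN _ hper, Matrix.one_apply]
  have hdvd : (N : ℤ) ∣ (n : ℤ) - m ↔ m = n := by
    refine ⟨fun h => Fin.ext ?_, fun h => by simp [h]⟩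
    have := Int.eq_zero_of_abs_lt_dvd h (by rw [abs_lt]; omega)
    omega
  simp only [hdvd]
  split_ifs
  · exact inv_mul_cancel₀ (Nat.cast_ne_zero.2 hN)
  · exact mul_zero _

lemma Zmat_eq_diagonal : Zmat N = Matrix.diagonal fun n : Fin N => ζ N ^ (n : ℕ) := by
  simp only [Zmat, ζ_pow]

lemma inv_Zmat_sq : (Zmat N ^ 2)⁻¹ = Matrix.diagonal fun n : Fin N => ζ N ^ (-(2 * n : ℤ)) := by
  refine Matrix.inv_eq_right_inv ?_
  rw [Zmat_eq_diagonal, Matrix.diagonal_pow, Matrix.diagonal_mul_diagonal, ← Matrix.diagonal_one]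
  congr 1
  ext n
  rw [Pi.pow_apply, ← zpow_natCast, ← zpow_natCast, ← zpow_mul, ← zpow_add₀ ζ_ne_zero,
    show ((n : ℕ) : ℤ) * (2 : ℕ) + -(2 * n) = 0 by push_cast; ring, zpow_zero]

lemma dftEntry_eq_ζ_add_self (M a b : ℕ) :
    dftEntry M a b = ((√(M : ℝ) : ℝ) : ℂ)⁻¹ * ζ (M + M) ^ (-(4 * a * b : ℤ)) := by
  rw [dftEntry_eq_ζ, ← ζ_add_self_sq, ← zpow_natCast, ← zpow_mul]
  congr 2
  push_cast
  ring

lemma sum_mul_Dmat (M : ℕ) (c : Fin (M + M) → ℂ) (j : Fin (M + M)) :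
    ∑ k, c k * Dmat (M + M) k j =
      if (j : ℕ) < M then ∑ a : Fin M, c (Fin.castAdd M a) * dftEntry M a j
      else -∑ a : Fin M, c (Fin.natAdd M a) * dftEntry M a (j - M) := by
  have hM : (M + M) / 2 = M := by omega
  rw [Fin.sum_univ_add]
  split_ifs with hj
  · simp [Dmat, hM, hj]
  · have hx (x : Fin M) : ¬M ≤ (x : ℕ) := not_le.2 x.isLt
    simp [Dmat, hM, hj, hx, not_lt.1 hj, ← sum_neg_distrib]

def bakerKernel (M : ℕ) (t : ℤ) : ℂ := ∑ a ∈ range M, ζ (M + M) ^ ((2 * a + 1) * t)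

lemma bakerMatrix_apply (i j : Fin (M + M)) :
    bakerMatrix (M + M) i j = ((√((M + M : ℕ) : ℝ) : ℝ) : ℂ)⁻¹ * ((√(M : ℝ) : ℝ) : ℂ)⁻¹ *
      ((if (j : ℕ) < M then 1 else -(-1) ^ (i : ℕ)) * bakerKernel M (i - 2 * j)) := by
  have hN : M + M ≠ 0 := by have := i.pos; omega
  rw [bakerMatrix, inv_dftMatrix hN, inv_Zmat_sq, Zmat_eq_diagonal, Matrix.mul_diagonal,
    Matrix.mul_apply]
  simp only [Matrix.diagonal_mul, Matrix.of_apply]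
  rw [sum_mul_Dmat, bakerKernel, ← Fin.sum_univ_eq_sum_range]
  split_ifs with hj
  · rw [sum_mul, one_mul, mul_sum]
    refine sum_congr rfl fun a _ => ?_
    have hexp : ζ (M + M) ^ (i : ℕ) * ζ (M + M) ^ (2 * i * a : ℤ) * ζ (M + M) ^ (-(4 * a * j : ℤ)) *
        ζ (M + M) ^ (-(2 * j : ℤ)) = ζ (M + M) ^ ((2 * a + 1) * ((i : ℤ) - 2 * j)) := by
      rw [← zpow_natCast, ← zpow_add₀ ζ_ne_zero, ← zpow_add₀ ζ_ne_zero, ← zpow_add₀ ζ_ne_zero]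
      ring_nf
    rw [Fin.val_castAdd, dftEntry_eq_ζ_add_self]
    linear_combination ((√((M + M : ℕ) : ℝ) : ℝ) : ℂ)⁻¹ * ((√(M : ℝ) : ℝ) : ℂ)⁻¹ * hexp
  · rw [neg_mul, sum_mul, mul_sum, mul_sum, ← sum_neg_distrib]
    refine sum_congr rfl fun a _ => ?_
    have hexp : ζ (M + M) ^ (i : ℕ) * ζ (M + M) ^ (2 * i * (M + a) : ℤ) *
        ζ (M + M) ^ (-(4 * a * ((j : ℤ) - M))) * ζ (M + M) ^ (-(2 * j : ℤ)) =
        (-1) ^ (i : ℕ) * ζ (M + M) ^ ((2 * a + 1) * ((i : ℤ) - 2 * j)) := by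
      rw [← zpow_natCast, ← zpow_add₀ ζ_ne_zero, ← zpow_add₀ ζ_ne_zero, ← zpow_add₀ ζ_ne_zero,
        show (i : ℤ) + 2 * i * (M + a) + -(4 * a * ((j : ℤ) - M)) + -(2 * j) =
          (2 * a + 1) * ((i : ℤ) - 2 * j) + ((M + M : ℕ) : ℤ) * (i + 2 * a) by push_cast; ring,
        ζ_zpow_add_mul_self hN, zpow_add₀ (by norm_num), (even_two_mul _).neg_one_zpow, mul_one,
        zpow_natCast]
    rw [Fin.val_natAdd, dftEntry_eq_ζ_add_self]
    push_cast [Nat.cast_sub (not_lt.1 hj)]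
    linear_combination -((√((M : ℝ) + M) : ℝ) : ℂ)⁻¹ * ((√(M : ℝ) : ℝ) : ℂ)⁻¹ * hexp

lemma bakerKernel_add_mul (M : ℕ) (t k : ℤ) :
    bakerKernel M (t + (M + M : ℕ) * k) = (-1) ^ k * bakerKernel M t := by
  rw [bakerKernel, bakerKernel, mul_sum]
  refine sum_congr rfl fun a ha => ?_
  have hN : M + M ≠ 0 := by have := mem_range.1 ha; omega
  rw [show (2 * a + 1) * (t + (M + M : ℕ) * k) = (2 * a + 1) * t + (M + M : ℕ) * ((2 * a + 1) * k)
      by ring, ζ_zpow_add_mul_self hN, zpow_mul, (odd_two_mul_add_one (a : ℤ)).neg_one_zpow]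

lemma bakerKernel_neg_of_odd (M : ℕ) {t : ℤ} (ht : Odd t) :
    bakerKernel M (-t) = -bakerKernel M t := by
  rw [bakerKernel, ← sum_range_reflect, bakerKernel, ← sum_neg_distrib]
  refine sum_congr rfl fun a ha => ?_
  have ha : a < M := mem_range.1 ha
  have hcast : ((M - 1 - a : ℕ) : ℤ) = M - 1 - a := by omega
  rw [hcast,
    show (2 * ((M : ℤ) - 1 - a) + 1) * -t = (2 * a + 1) * t + (M + M : ℕ) * -t by push_cast; ring,
    ζ_zpow_add_mul_self (by omega), ht.neg.neg_one_zpow, neg_one_mul]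

lemma bakerKernel_of_even (M : ℕ) {t : ℤ} (ht : Even t) :
    bakerKernel M t = if ((M + M : ℕ) : ℤ) ∣ t then M * ζ (M + M) ^ t else 0 := by
  rcases Nat.eq_zero_or_pos M with rfl | hM
  · simp [bakerKernel]
  have hN : M + M ≠ 0 := by omega
  have hterm (a : ℕ) :
      ζ (M + M) ^ ((2 * a + 1) * t) = ζ (M + M) ^ t * (ζ (M + M) ^ (2 * t)) ^ a := by
    rw [← zpow_natCast, ← zpow_mul, ← zpow_add₀ ζ_ne_zero]
    ring_nf
  have hper : ζ (M + M) ^ (2 * t * M) = 1 := by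
    rw [show 2 * t * M = 0 + (M + M : ℕ) * t by push_cast; ring, ζ_zpow_add_mul_self hN,
      ht.neg_one_zpow, zpow_zero, one_mul]
  rw [bakerKernel]
  simp only [hterm, ← mul_sum, sum_range_ζ_zpow_two_mul_pow hN t hper]
  split_ifs <;> ring

lemma bakerMatrix_apply_of_odd {i : Fin (M + M)} (hi : Odd (i : ℕ)) (j : Fin (M + M)) :
    bakerMatrix (M + M) i j = ((√((M + M : ℕ) : ℝ) : ℝ) : ℂ)⁻¹ * ((√(M : ℝ) : ℝ) : ℂ)⁻¹ *
      bakerKernel M (i - 2 * j) := by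
  rw [bakerMatrix_apply, hi.neg_one_pow, neg_neg, ite_self, one_mul]

lemma bakerMatrix_apply_of_even {i : Fin (M + M)} (hi : Even (i : ℕ)) (j : Fin (M + M)) :
    bakerMatrix (M + M) i j = if ((M + M : ℕ) : ℤ) ∣ i - 2 * j then ((√2 : ℝ) : ℂ)⁻¹ else 0 := by
  have hM : M ≠ 0 := by have := i.pos; omega
  have hscale :
      ((√((M + M : ℕ) : ℝ) : ℝ) : ℂ)⁻¹ * ((√(M : ℝ) : ℝ) : ℂ)⁻¹ * M = ((√2 : ℝ) : ℂ)⁻¹ := by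
    have hsqrt : ((√((M + M : ℕ) : ℝ) : ℝ) : ℂ) = ((√2 : ℝ) : ℂ) * ((√(M : ℝ) : ℝ) : ℂ) := by
      rw [← ofReal_mul, ← Real.sqrt_mul zero_le_two]
      push_cast
      ring_nf
    have hM' : ((√(M : ℝ) : ℝ) : ℂ) ≠ 0 := by
      rw [ofReal_ne_zero, Real.sqrt_ne_zero']
      exact_mod_cast Nat.pos_of_ne_zero hM
    rw [hsqrt, ← ofReal_sqrt_mul_self_natCast M]
    field_simp
  have ht : Even ((i : ℤ) - 2 * j) := (Int.even_coe_nat _).2 hi |>.sub (even_two_mul _)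
  have hi' := i.isLt
  have hj' := j.isLt
  rw [bakerMatrix_apply, hi.neg_one_pow, bakerKernel_of_even M ht]
  split_ifs with hj hdvd hdvd
  · have h0 := Int.eq_zero_of_abs_lt_dvd hdvd (by rw [abs_lt]; push_cast; omega)
    rw [h0, zpow_zero, ← hscale]
    ring
  · simp
  · have h0 := Int.eq_zero_of_abs_lt_dvd ((dvd_add_right hdvd).2 (dvd_mul_right _ 1))
      (by rw [abs_lt]; push_cast; omega)
    rw [show (i : ℤ) - 2 * j = 0 + (M + M : ℕ) * (-1) by omega, ζ_zpow_add_mul_self (by omega),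
      zpow_zero, ← hscale]
    ring
  · simp

lemma val_neg_mod_two [NeZero (M + M)] (i : Fin (M + M)) :
    ((-i : Fin (M + M)) : ℕ) % 2 = (i : ℕ) % 2 := by
  rw [Fin.val_neg]
  split_ifs with h
  · simp [h]
  · have := i.isLt
    omega

lemma exists_val_neg_sub_two_mul_val_neg [NeZero N] (i j : Fin N) :
    ∃ k : ℤ, ((-i : Fin N) : ℤ) - 2 * ((-j : Fin N) : ℤ) = -((i : ℤ) - 2 * j) + N * k ∧
      (i ≠ 0 → Odd k) := by
  refine ⟨(if i = 0 then 0 else 1) - 2 * (if j = 0 then 0 else 1), ?_, fun hi => ?_⟩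
  · have := i.isLt
    have := j.isLt
    rw [Fin.val_neg, Fin.val_neg]
    split_ifs with hi hj hj <;> simp only [Fin.ext_iff, Fin.val_zero] at hi hj ⊢ <;> omega
  · rw [if_neg hi]
    split_ifs <;> decide

lemma bakerMatrix_neg_neg [NeZero (M + M)] (i j : Fin (M + M)) :
    bakerMatrix (M + M) (-i) (-j) = bakerMatrix (M + M) i j := by
  obtain ⟨k, hk, hk_odd⟩ := exists_val_neg_sub_two_mul_val_neg i j
  have hpar := val_neg_mod_two i
  rcases Nat.even_or_odd (i : ℕ) with hi | hi
  · rw [bakerMatrix_apply_of_even hi,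
      bakerMatrix_apply_of_even (Nat.even_iff.2 (hpar.trans (Nat.even_iff.1 hi))), hk]
    simp only [dvd_add_left (dvd_mul_right _ _), dvd_neg]
  · have hi0 : i ≠ 0 := by
      rintro rfl
      simp at hi
    have ht : Odd ((i : ℤ) - 2 * j) := ((Int.odd_coe_nat _).2 hi).sub_even (even_two_mul _)
    rw [bakerMatrix_apply_of_odd hi,
      bakerMatrix_apply_of_odd (Nat.odd_iff.2 (hpar.trans (Nat.odd_iff.1 hi))), hk,
      bakerKernel_add_mul, (hk_odd hi0).neg_one_zpow, bakerKernel_neg_of_odd M ht, neg_one_mul,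
      neg_neg]

lemma parityPermMatrix_eq_toMatrix [NeZero N] :
    parityPermMatrix N = (Equiv.neg (Fin N)).toPEquiv.toMatrix := by
  ext i j
  simp only [parityPermMatrix, Matrix.of_apply, PEquiv.toMatrix_apply, Equiv.toPEquiv_apply,
    Option.mem_def, Option.some_inj, Equiv.neg_apply, neg_eq_iff_add_eq_zero, ← Fin.val_add,
    Fin.val_eq_zero_iff]

lemma parityPermMatrix_mul_mul [NeZero N] (A : Matrix (Fin N) (Fin N) ℂ) :
    parityPermMatrix N * A * parityPermMatrix N = A.submatrix Neg.neg Neg.neg := by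
  rw [parityPermMatrix_eq_toMatrix, PEquiv.toMatrix_toPEquiv_mul, PEquiv.mul_toMatrix_toPEquiv,
    Matrix.submatrix_submatrix]
  rfl

end QuantumBaker

theorem bakerMatrix_parity_symmetry_general (N : ℕ) (hNeven : Even N) :
    parityPermMatrix N * bakerMatrix N * parityPermMatrix N = bakerMatrix N := by
  obtain ⟨M, rfl⟩ := hNeven
  ext i j
  have : NeZero (M + M) := ⟨i.pos.ne'⟩
  rw [QuantumBaker.parityPermMatrix_mul_mul, Matrix.submatrix_apply]
  exact QuantumBaker.bakerMatrix_neg_neg i j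

/-- Parity symmetry of the quantum baker matrix: `P 𝖡 P = 𝖡`. -/
theorem bakerMatrix_parity_symmetry (N : ℕ) (hN : 0 < N) (hNeven : Even N) :
    parityPermMatrix N * bakerMatrix N * parityPermMatrix N = bakerMatrix N :=
  bakerMatrix_parity_symmetry_general N hNeven
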